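/- There is a constant C depending only on m, c, C₀ such that for all 0 ≤ S < T and all x, y ∈ ℤ: | (N²/2)·Σ_{k=1}^m α̃_k·(G_{S,T,x+k,y} + G_{S,T,x−k,y} − 2G_{S,T,x,y}) − (N²/2)·(Σ_{k=1}^m k²α̃_k)·(G_{S,T,x+1,y} + G_{S,T,x−1,y} − 2G_{S,T,x,y}) | ≤ C·(Σ_{k=1}^m k⁴·α̃_k)·N^{−2}·(T−S)^{−2}. -/

import Mathlib

/-!
In Fourier variables `G` is the inverse transform of `exp (-N²(T-S) φ(ξ))` with
`φ(ξ) = ∑ₖ α̃ₖ (1 - cos kξ)`, and the difference of the two generators acts as multiplication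
by `N² D(ξ)` with `D(ξ) = ∑ₖ α̃ₖ (k²(1 - cos ξ) - (1 - cos kξ))`. The quadratic terms of the
Taylor expansions cancel in `D`, so `|D(ξ)| ≤ (∑ₖ k⁴ α̃ₖ) ξ⁴ / 12`, while `φ(ξ) ≥ 2 α̃₁ ξ² / π²`
on `[-π, π]`. Hence the integrand is at most `N² (∑ₖ k⁴ α̃ₖ) ξ⁴ exp (-κ ξ²)` with
`κ = 2 c N² (T-S) / π²`, and `ξ⁴ exp (-κ ξ²) ≤ 2 / κ²`.
-/

open scoped BigOperators

/-- The full-line heat kernel on `ℤ`: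
`G_{S,T,x,y} = (1/2π)∫_{−π}^{π} e^{−i(x−y)ξ} exp(−N²(T−S)·Σ_k α̃_k(1 − cos kξ)) dξ`,
the heat kernel of `(N²/2)·Σ_k α̃_k Δ_k`. -/
noncomputable def Gker (N m : ℕ) (α : ℕ → ℝ) (S T : ℝ) (x y : ℤ) : ℝ :=
  (1 / (2 * Real.pi)) *
    (∫ ξ in (-Real.pi)..Real.pi,
      Complex.exp (-Complex.I * (((x : ℤ) - y : ℤ) : ℂ) * (ξ : ℂ)) *
        ((Real.exp (-(N : ℝ) ^ 2 * (T - S) *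
          ∑ k ∈ Finset.Icc 1 m, α k * (1 - Real.cos ((k : ℝ) * ξ))) : ℝ) : ℂ)).re

open Real MeasureTheory

lemma sq_mul_exp_neg_le_two {u : ℝ} (hu : 0 ≤ u) : u ^ 2 * exp (-u) ≤ 2 := by
  have h := pow_div_factorial_le_exp u hu 2
  rw [exp_neg, ← div_eq_mul_inv, div_le_iff₀ (exp_pos u)]
  norm_num [Nat.factorial] at h
  linarith

lemma abs_sq_mul_one_sub_cos_sub_one_sub_cos_mul_le (k : ℕ) (ξ : ℝ) :
    |(k : ℝ) ^ 2 * (1 - cos ξ) - (1 - cos (k * ξ))| ≤ (k : ℝ) ^ 4 * ξ ^ 4 / 12 := by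
  set s := ξ / 2
  have hξ : ξ = 2 * s := by ring
  -- `1 - cos (2t) = 2 sin² t` turns the defect into a difference of squares.
  have hfac : (k : ℝ) ^ 2 * (1 - cos ξ) - (1 - cos (k * ξ)) =
      2 * (k * sin s - sin (k * s)) * (k * sin s + sin (k * s)) := by
    rw [hξ, show (k : ℝ) * (2 * s) = 2 * (k * s) by ring, cos_two_mul_eq_one_sub,
      cos_two_mul_eq_one_sub]
    ring
  have hk : (k : ℝ) ≤ k ^ 3 := by
    rcases Nat.eq_zero_or_pos k with rfl | hk
    · simp
    · exact le_self_pow₀ (by exact_mod_cast hk) (by norm_num)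
  have hdiff : |k * sin s - sin (k * s)| ≤ k ^ 3 * |s| ^ 3 / 3 :=
    calc |k * sin s - sin (k * s)| = |(k * s - sin (k * s)) - k * (s - sin s)| := by ring_nf
      _ ≤ |k * s - sin (k * s)| + k * |s - sin s| := by
          grw [abs_sub, abs_mul, Nat.abs_cast]
      _ ≤ |k * s| ^ 3 / 6 + k * (|s| ^ 3 / 6) := by
          grw [abs_sub_sin_le, abs_sub_sin_le]
      _ ≤ k ^ 3 * |s| ^ 3 / 3 := by
          rw [abs_mul, Nat.abs_cast]
          nlinarith [pow_nonneg (abs_nonneg s) 3]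
  have hsum : |k * sin s + sin (k * s)| ≤ 2 * k * |s| :=
    calc |k * sin s + sin (k * s)| ≤ k * |sin s| + |sin (k * s)| := by
          grw [abs_add_le, abs_mul, Nat.abs_cast]
      _ ≤ k * |s| + |k * s| := by grw [abs_sin_le_abs, abs_sin_le_abs]
      _ = 2 * k * |s| := by rw [abs_mul, Nat.abs_cast]; ring
  rw [hfac, abs_mul, abs_mul, abs_two]
  calc 2 * |k * sin s - sin (k * s)| * |k * sin s + sin (k * s)|
      ≤ 2 * (k ^ 3 * |s| ^ 3 / 3) * (2 * k * |s|) := by gcongr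
    _ = (k : ℝ) ^ 4 * ξ ^ 4 / 12 := by
        rw [hξ, mul_pow, ← (by norm_num : Even 4).pow_abs s]
        ring

section Symbol

variable {m : ℕ} {α : ℕ → ℝ}

noncomputable def heatSymbol (m : ℕ) (α : ℕ → ℝ) (ξ : ℝ) : ℝ :=
  ∑ k ∈ Finset.Icc 1 m, α k * (1 - cos (k * ξ))

/-- Half the Fourier symbol of `∑ₖ α k • Δₖ - (∑ₖ k² α k) • Δ₁`. -/
noncomputable def homogenizationDefect (m : ℕ) (α : ℕ → ℝ) (ξ : ℝ) : ℝ :=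
  ∑ k ∈ Finset.Icc 1 m, α k * ((k : ℝ) ^ 2 * (1 - cos ξ) - (1 - cos (k * ξ)))

@[fun_prop]
lemma continuous_heatSymbol : Continuous (heatSymbol m α) := by
  unfold heatSymbol
  fun_prop

lemma mul_sq_le_heatSymbol (hm : 1 ≤ m) (hα : ∀ k ∈ Finset.Icc 1 m, 0 ≤ α k) {ξ : ℝ}
    (hξ : |ξ| ≤ π) : 2 / π ^ 2 * ξ ^ 2 * α 1 ≤ heatSymbol m α ξ := by
  have h₁ : 0 ≤ α 1 := hα 1 (Finset.mem_Icc.2 ⟨le_rfl, hm⟩)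
  calc 2 / π ^ 2 * ξ ^ 2 * α 1 ≤ α 1 * (1 - cos ((1 : ℕ) * ξ)) := by
        rw [Nat.cast_one, one_mul]
        nlinarith [cos_le_one_sub_mul_cos_sq hξ]
    _ ≤ heatSymbol m α ξ :=
        Finset.single_le_sum (f := fun k ↦ α k * (1 - cos (k * ξ)))
          (fun k hk ↦ mul_nonneg (hα k hk) (sub_nonneg.2 (cos_le_one _)))
          (Finset.mem_Icc.2 ⟨le_rfl, hm⟩)

lemma abs_homogenizationDefect_le (hα : ∀ k ∈ Finset.Icc 1 m, 0 ≤ α k) (ξ : ℝ) :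
    |homogenizationDefect m α ξ| ≤ (∑ k ∈ Finset.Icc 1 m, (k : ℝ) ^ 4 * α k) * ξ ^ 4 / 12 :=
  calc |homogenizationDefect m α ξ|
      ≤ ∑ k ∈ Finset.Icc 1 m, α k * ((k : ℝ) ^ 4 * ξ ^ 4 / 12) := by
        refine (Finset.abs_sum_le_sum_abs _ _).trans (Finset.sum_le_sum fun k hk ↦ ?_)
        rw [abs_mul, abs_of_nonneg (hα k hk)]
        exact mul_le_mul_of_nonneg_left
          (abs_sq_mul_one_sub_cos_sub_one_sub_cos_mul_le k ξ) (hα k hk)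
    _ = (∑ k ∈ Finset.Icc 1 m, (k : ℝ) ^ 4 * α k) * ξ ^ 4 / 12 := by
        rw [Finset.sum_mul, Finset.sum_div]
        exact Finset.sum_congr rfl fun k _ ↦ by ring

lemma abs_homogenizationDefect_mul_exp_le (hm : 1 ≤ m) (hα : ∀ k ∈ Finset.Icc 1 m, 0 ≤ α k)
    {c t ξ : ℝ} (hc : 0 < c) (hα1 : c ≤ α 1) (ht : 0 < t) (hξ : |ξ| ≤ π) :
    |homogenizationDefect m α ξ * exp (-t * heatSymbol m α ξ)| ≤
      π ^ 4 * (∑ k ∈ Finset.Icc 1 m, (k : ℝ) ^ 4 * α k) / (24 * c ^ 2 * t ^ 2) := by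
  set κ := 2 * c * t / π ^ 2
  have hκ : 0 < κ := by positivity
  have hSb : 0 ≤ ∑ k ∈ Finset.Icc 1 m, (k : ℝ) ^ 4 * α k :=
    Finset.sum_nonneg fun k hk ↦ mul_nonneg (by positivity) (hα k hk)
  have hexp : exp (-t * heatSymbol m α ξ) ≤ exp (-(κ * ξ ^ 2)) := by
    have hφ := mul_sq_le_heatSymbol hm hα hξ
    have hκφ : κ * ξ ^ 2 ≤ t * heatSymbol m α ξ :=
      calc κ * ξ ^ 2 = t * (2 / π ^ 2 * ξ ^ 2 * c) := by ring
        _ ≤ t * heatSymbol m α ξ := by gcongr; exact le_trans (by gcongr) hφ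
    exact exp_le_exp.2 (by linarith)
  have hquartic : ξ ^ 4 * exp (-(κ * ξ ^ 2)) ≤ 2 / κ ^ 2 := by
    rw [le_div_iff₀ (by positivity)]
    linarith [sq_mul_exp_neg_le_two (by positivity : 0 ≤ κ * ξ ^ 2)]
  calc |homogenizationDefect m α ξ * exp (-t * heatSymbol m α ξ)|
      ≤ (∑ k ∈ Finset.Icc 1 m, (k : ℝ) ^ 4 * α k) * ξ ^ 4 / 12 * exp (-(κ * ξ ^ 2)) := by
        rw [abs_mul, abs_exp]
        exact mul_le_mul (abs_homogenizationDefect_le hα ξ) hexp (exp_pos _).le (by positivity)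
    _ = (∑ k ∈ Finset.Icc 1 m, (k : ℝ) ^ 4 * α k) / 12 * (ξ ^ 4 * exp (-(κ * ξ ^ 2))) := by ring
    _ ≤ (∑ k ∈ Finset.Icc 1 m, (k : ℝ) ^ 4 * α k) / 12 * (2 / κ ^ 2) := by gcongr
    _ = π ^ 4 * (∑ k ∈ Finset.Icc 1 m, (k : ℝ) ^ 4 * α k) / (24 * c ^ 2 * t ^ 2) := by
        simp only [κ]
        field_simp
        ring

end Symbol

section Fourier

variable {f : ℝ → ℝ} {a b : ℝ}

lemma re_intervalIntegral_exp_neg_I_mul_ofReal (hf : IntervalIntegrable f volume a b) (n : ℝ) :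
    (∫ ξ in a..b, Complex.exp (-Complex.I * n * ξ) * (f ξ : ℂ)).re =
      ∫ ξ in a..b, cos (n * ξ) * f ξ := by
  have hf' : IntervalIntegrable (fun ξ ↦ (f ξ : ℂ)) volume a b := ⟨hf.1.ofReal, hf.2.ofReal⟩
  rw [← RCLike.re_to_complex,
    ← intervalIntegral.intervalIntegral_re (hf'.continuousOn_mul (by fun_prop))]
  refine intervalIntegral.integral_congr fun ξ _ ↦ ?_
  rw [show -Complex.I * n * ξ = ((-(n * ξ) : ℝ) : ℂ) * Complex.I by push_cast; ring,
    RCLike.re_to_complex, Complex.re_mul_ofReal, Complex.exp_ofReal_mul_I_re, cos_neg]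

lemma integral_cos_add_add_integral_cos_sub_sub (hf : IntervalIntegrable f volume a b)
    (t s : ℝ) :
    (∫ ξ in a..b, cos ((t + s) * ξ) * f ξ) + (∫ ξ in a..b, cos ((t - s) * ξ) * f ξ) -
        2 * ∫ ξ in a..b, cos (t * ξ) * f ξ =
      ∫ ξ in a..b, cos (t * ξ) * (2 * (cos (s * ξ) - 1)) * f ξ := by
  have hI (u : ℝ) : IntervalIntegrable (fun ξ ↦ cos (u * ξ) * f ξ) volume a b :=
    hf.continuousOn_mul (by fun_prop)
  rw [← intervalIntegral.integral_add (hI _) (hI _), ← intervalIntegral.integral_const_mul,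
    ← intervalIntegral.integral_sub ((hI _).add (hI _)) ((hI _).const_mul 2)]
  refine intervalIntegral.integral_congr fun ξ _ ↦ ?_
  simp only [add_mul, sub_mul, cos_add, cos_sub]
  ring

lemma abs_inv_two_pi_mul_integral_le {g : ℝ → ℝ} {M : ℝ}
    (hg : ∀ ξ ∈ Set.uIoc (-π) π, |g ξ| ≤ M) : |(2 * π)⁻¹ * ∫ ξ in -π..π, g ξ| ≤ M := by
  have h := intervalIntegral.norm_integral_le_of_norm_le_const (f := g) (by simpa using hg)
  rw [Real.norm_eq_abs, sub_neg_eq_add, ← two_mul,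
    abs_of_pos (by positivity : (0 : ℝ) < 2 * π)] at h
  rw [abs_mul, abs_of_pos (by positivity), inv_mul_le_iff₀ (by positivity)]
  linarith

end Fourier

section Kernel

variable (N m : ℕ) (α : ℕ → ℝ) (S T : ℝ) (x y : ℤ)

lemma Gker_eq_integral_cos :
    Gker N m α S T x y = (2 * π)⁻¹ *
      ∫ ξ in -π..π, cos ((x - y : ℤ) * ξ) * exp (-N ^ 2 * (T - S) * heatSymbol m α ξ) := by
  rw [← re_intervalIntegral_exp_neg_I_mul_ofReal
      (Continuous.intervalIntegrable (by fun_prop) _ _),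
    Complex.ofReal_intCast, Gker, one_div]
  rfl

lemma Gker_add_add_Gker_sub_sub (k : ℤ) :
    Gker N m α S T (x + k) y + Gker N m α S T (x - k) y - 2 * Gker N m α S T x y =
      (2 * π)⁻¹ * ∫ ξ in -π..π, cos ((x - y : ℤ) * ξ) * (2 * (cos (k * ξ) - 1)) *
        exp (-N ^ 2 * (T - S) * heatSymbol m α ξ) := by
  have hadd : ((x + k - y : ℤ) : ℝ) = (x - y : ℤ) + k := by push_cast; ring
  have hsub : ((x - k - y : ℤ) : ℝ) = (x - y : ℤ) - k := by push_cast; ring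
  simp only [Gker_eq_integral_cos, hadd, hsub]
  rw [← integral_cos_add_add_integral_cos_sub_sub
    (Continuous.intervalIntegrable (by fun_prop) _ _)]
  ring

end Kernel

lemma generator_difference_eq_integral (N m : ℕ) (α : ℕ → ℝ) (S T : ℝ) (x y : ℤ) :
    ((N : ℝ) ^ 2 / 2) * (∑ k ∈ Finset.Icc 1 m, α k *
        (Gker N m α S T (x + k) y + Gker N m α S T (x - k) y - 2 * Gker N m α S T x y)) -
      ((N : ℝ) ^ 2 / 2) * (∑ k ∈ Finset.Icc 1 m, (k : ℝ) ^ 2 * α k) *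
        (Gker N m α S T (x + 1) y + Gker N m α S T (x - 1) y - 2 * Gker N m α S T x y) =
      (2 * π)⁻¹ * ∫ ξ in -π..π, cos ((x - y : ℤ) * ξ) * (N ^ 2 * homogenizationDefect m α ξ) *
        exp (-N ^ 2 * (T - S) * heatSymbol m α ξ) := by
  set g : ℝ → ℝ → ℝ := fun s ξ ↦ cos ((x - y : ℤ) * ξ) * (2 * (cos (s * ξ) - 1)) *
    exp (-N ^ 2 * (T - S) * heatSymbol m α ξ)
  have hg (s : ℝ) : IntervalIntegrable (g s) volume (-π) π :=
    Continuous.intervalIntegrable (by fun_prop) _ _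
  have hpt (ξ : ℝ) : cos ((x - y : ℤ) * ξ) * (N ^ 2 * homogenizationDefect m α ξ) *
      exp (-N ^ 2 * (T - S) * heatSymbol m α ξ) =
      (N : ℝ) ^ 2 / 2 * ∑ k ∈ Finset.Icc 1 m, α k * g k ξ -
        (N : ℝ) ^ 2 / 2 * (∑ k ∈ Finset.Icc 1 m, (k : ℝ) ^ 2 * α k) * g 1 ξ := by
    simp only [g, homogenizationDefect, one_mul, Finset.mul_sum, Finset.sum_mul,
      ← Finset.sum_sub_distrib]
    exact Finset.sum_congr rfl fun k _ ↦ by ring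
  have h1 := Gker_add_add_Gker_sub_sub N m α S T x y 1
  rw [Int.cast_one] at h1
  simp only [Gker_add_add_Gker_sub_sub N m α S T x y (_ : ℕ), Int.cast_natCast, h1]
  have hsum : IntervalIntegrable (fun ξ ↦ ∑ k ∈ Finset.Icc 1 m, α k * g k ξ) volume (-π) π := by
    simpa only [Finset.sum_fn] using
      IntervalIntegrable.sum (Finset.Icc 1 m) fun (k : ℕ) _ ↦ (hg k).const_mul (α k)
  rw [intervalIntegral.integral_congr fun ξ _ ↦ hpt ξ,
    intervalIntegral.integral_sub (hsum.const_mul _) ((hg 1).const_mul _),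
    intervalIntegral.integral_const_mul, intervalIntegral.integral_const_mul,
    intervalIntegral.integral_finsetSum fun (k : ℕ) _ ↦ (hg k).const_mul (α k)]
  simp_rw [intervalIntegral.integral_const_mul, mul_left_comm (α _) (2 * π)⁻¹, ← Finset.mul_sum]
  ring

lemma abs_generator_difference_integrand_le {N m : ℕ} {α : ℕ → ℝ} {c S T : ℝ} (hm : 1 ≤ m)
    (hα : ∀ k ∈ Finset.Icc 1 m, 0 ≤ α k) (hc : 0 < c) (hα1 : c ≤ α 1) (hN : (0 : ℝ) < N)
    (hTS : 0 < T - S) (a : ℝ) {ξ : ℝ} (hξ : |ξ| ≤ π) :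
    |cos (a * ξ) * (N ^ 2 * homogenizationDefect m α ξ) *
        exp (-N ^ 2 * (T - S) * heatSymbol m α ξ)| ≤
      π ^ 4 * (∑ k ∈ Finset.Icc 1 m, (k : ℝ) ^ 4 * α k) / (24 * c ^ 2 * N ^ 2 * (T - S) ^ 2) :=
  calc _ = |cos (a * ξ)| * (N ^ 2 * |homogenizationDefect m α ξ *
        exp (-(N ^ 2 * (T - S)) * heatSymbol m α ξ)|) := by
        rw [abs_mul, abs_mul, abs_mul, abs_mul, abs_pow, abs_of_pos hN, neg_mul]
        ring
    _ ≤ 1 * (N ^ 2 * (π ^ 4 * (∑ k ∈ Finset.Icc 1 m, (k : ℝ) ^ 4 * α k) /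
        (24 * c ^ 2 * (N ^ 2 * (T - S)) ^ 2))) := by
        gcongr
        · exact abs_cos_le_one _
        · exact abs_homogenizationDefect_mul_exp_le hm hα hc hα1 (by positivity) hξ
    _ = _ := by field_simp

theorem full_line_kernel_generator_comparison_general
    (m : ℕ) (c C₀ : ℝ) (hm : 1 ≤ m) (hc : 0 < c) :
    ∃ C : ℝ, 0 < C ∧
      ∀ (N : ℕ) (α : ℕ → ℝ), 1 ≤ N →
        (∀ k ∈ Finset.Icc 1 m, 0 ≤ α k) → c ≤ α 1 →
        (∑ k ∈ Finset.Icc 1 m, α k) ≤ C₀ →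
        ∀ (S T : ℝ), 0 ≤ S → S < T → ∀ x y : ℤ,
          |((N : ℝ) ^ 2 / 2) *
              (∑ k ∈ Finset.Icc 1 m, α k *
                (Gker N m α S T (x + k) y + Gker N m α S T (x - k) y -
                  2 * Gker N m α S T x y)) -
            ((N : ℝ) ^ 2 / 2) * (∑ k ∈ Finset.Icc 1 m, (k : ℝ) ^ 2 * α k) *
              (Gker N m α S T (x + 1) y + Gker N m α S T (x - 1) y -
                2 * Gker N m α S T x y)| ≤
          C * (∑ k ∈ Finset.Icc 1 m, (k : ℝ) ^ 4 * α k) * (N : ℝ) ^ (-(2 : ℝ)) *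
            (T - S) ^ (-(2 : ℝ)) := by
  refine ⟨π ^ 4 / (24 * c ^ 2), by positivity, ?_⟩
  intro N α hN hα hα1 _ S T _ hST x y
  have hN₀ : (0 : ℝ) < N := by exact_mod_cast hN
  have hTS : 0 < T - S := sub_pos.2 hST
  rw [generator_difference_eq_integral]
  refine (abs_inv_two_pi_mul_integral_le fun ξ hξ ↦
    abs_generator_difference_integrand_le hm hα hc hα1 hN₀ hTS _ ?_).trans_eq ?_
  · rw [Set.uIoc_of_le (by linarith [pi_pos])] at hξ
    exact abs_le.2 ⟨hξ.1.le, hξ.2⟩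
  · rw [rpow_neg hN₀.le, rpow_neg hTS.le, rpow_two, rpow_two]
    field_simp

/-- Comparison of the long-range generator with its nearest-neighbor homogenization on
the full-line heat kernel:
`|(N²/2)Σ_k α̃_k Δ_k G − (N²/2)(Σ_k k²α̃_k) Δ₁ G| ≤ C·(Σ_k k⁴α̃_k)·N^{−2}(T−S)^{−2}`
with `C` depending only on `m, c, C₀`. -/
theorem full_line_kernel_generator_comparison
    (m : ℕ) (c C₀ : ℝ) (hm : 1 ≤ m) (hc : 0 < c) (hC₀ : 0 < C₀) :
    ∃ C : ℝ, 0 < C ∧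
      ∀ (N : ℕ) (α : ℕ → ℝ), 1 ≤ N →
        (∀ k ∈ Finset.Icc 1 m, 0 ≤ α k) → c ≤ α 1 →
        (∑ k ∈ Finset.Icc 1 m, α k) ≤ C₀ →
        ∀ (S T : ℝ), 0 ≤ S → S < T → ∀ x y : ℤ,
          |((N : ℝ) ^ 2 / 2) *
              (∑ k ∈ Finset.Icc 1 m, α k *
                (Gker N m α S T (x + k) y + Gker N m α S T (x - k) y -
                  2 * Gker N m α S T x y)) -
            ((N : ℝ) ^ 2 / 2) * (∑ k ∈ Finset.Icc 1 m, (k : ℝ) ^ 2 * α k) *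
              (Gker N m α S T (x + 1) y + Gker N m α S T (x - 1) y -
                2 * Gker N m α S T x y)| ≤
          C * (∑ k ∈ Finset.Icc 1 m, (k : ℝ) ^ 4 * α k) * (N : ℝ) ^ (-(2 : ℝ)) *
            (T - S) ^ (-(2 : ℝ)) :=
  full_line_kernel_generator_comparison_general m c C₀ hm hc
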